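/- With g₁(z) = max{z, Bₙ} and the Esseen-type fraction L_{E,n}(g,ε,γ) = sup_{0<z<ε} (g(zBₙ)/(z·g(Bₙ)))·(γ·|Mₙ(z)| + z·Lₙ(z)), one has 1 ≤ L_{E,n}(g₁,ε,γ) ≤ max{ε,1}·max{γ,1} for all ε > 0 and γ > 0. -/

import Mathlib

/-!
The weight is `g₁(zBₙ) / (z g₁(Bₙ)) = max{z,1} / z`. The complementary fraction
`1 - Lₙ(z) = Bₙ⁻² Σₖ E[Xₖ²; |Xₖ| < zBₙ]` controls the truncated third moment,
`|Mₙ(z)| ≤ z (1 - Lₙ(z))`, and is at most `n z²`. Hence `γ|Mₙ(z)| + z Lₙ(z) ≤ max{γ,1} z`,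
which gives the upper bound, while the fraction dominates `Lₙ(z) ≥ 1 - n z² → 1` as `z → 0⁺`.
-/

open ProbabilityTheory MeasureTheory Set Filter Topology

section TruncatedMoments

variable {Ω : Type*} [MeasurableSpace Ω] {μ : Measure Ω}

lemma integrable_ite_abs_lt_sq {f : Ω → ℝ} (hf : Measurable f)
    (hf2 : Integrable (fun ω => f ω ^ 2) μ) (c : ℝ) :
    Integrable (fun ω => if |f ω| < c then f ω ^ 2 else 0) μ := by
  refine (hf2.indicator (s := {ω | |f ω| < c}) (measurableSet_lt hf.abs measurable_const)).congr
    (ae_of_all _ fun ω => ?_)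
  simp [Set.indicator_apply]

lemma integrable_ite_le_abs_sq {f : Ω → ℝ} (hf : Measurable f)
    (hf2 : Integrable (fun ω => f ω ^ 2) μ) (c : ℝ) :
    Integrable (fun ω => if c ≤ |f ω| then f ω ^ 2 else 0) μ := by
  refine (hf2.indicator (s := {ω | c ≤ |f ω|}) (measurableSet_le measurable_const hf.abs)).congr
    (ae_of_all _ fun ω => ?_)
  simp [Set.indicator_apply]

lemma integral_ite_abs_lt_sq_add_integral_ite_le_abs_sq {f : Ω → ℝ} (hf : Measurable f)
    (hf2 : Integrable (fun ω => f ω ^ 2) μ) (c : ℝ) :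
    (∫ ω, (if |f ω| < c then f ω ^ 2 else 0) ∂μ) + ∫ ω, (if c ≤ |f ω| then f ω ^ 2 else 0) ∂μ =
      ∫ ω, f ω ^ 2 ∂μ := by
  rw [← integral_add (integrable_ite_abs_lt_sq hf hf2 c) (integrable_ite_le_abs_sq hf hf2 c)]
  congr 1 with ω
  by_cases h : |f ω| < c
  · simp [h, not_le.mpr h]
  · simp [h, not_lt.mp h]

lemma integral_ite_abs_lt_sq_le [IsFiniteMeasure μ] (f : Ω → ℝ) (c : ℝ) :
    ∫ ω, (if |f ω| < c then f ω ^ 2 else 0) ∂μ ≤ μ.real univ * c ^ 2 := by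
  have hle : ∀ ω, (if |f ω| < c then f ω ^ 2 else 0) ≤ c ^ 2 := fun ω => by
    split_ifs with h
    · rw [← sq_abs]
      exact pow_le_pow_left₀ (abs_nonneg _) h.le 2
    · positivity
  calc ∫ ω, (if |f ω| < c then f ω ^ 2 else 0) ∂μ ≤ ∫ _, c ^ 2 ∂μ :=
        integral_mono_of_nonneg (ae_of_all _ fun ω => by positivity) (integrable_const _)
          (ae_of_all _ hle)
    _ = μ.real univ * c ^ 2 := by rw [integral_const, smul_eq_mul]

lemma abs_ite_abs_lt_pow_three_le (x c : ℝ) :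
    |if |x| < c then x ^ 3 else 0| ≤ c * if |x| < c then x ^ 2 else 0 := by
  split_ifs with h
  · rw [abs_pow, pow_succ, sq_abs, mul_comm c]
    exact mul_le_mul_of_nonneg_left h.le (sq_nonneg x)
  · simp

lemma abs_integral_ite_abs_lt_pow_three_le {f : Ω → ℝ} (hf : Measurable f)
    (hf2 : Integrable (fun ω => f ω ^ 2) μ) (c : ℝ) :
    |∫ ω, (if |f ω| < c then f ω ^ 3 else 0) ∂μ| ≤
      c * ∫ ω, (if |f ω| < c then f ω ^ 2 else 0) ∂μ := by
  rw [← integral_const_mul]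
  exact norm_integral_le_of_norm_le ((integrable_ite_abs_lt_sq hf hf2 c).const_mul c)
    (ae_of_all _ fun ω =>
      (Real.norm_eq_abs _).trans_le (abs_ite_abs_lt_pow_three_le (f ω) c))

variable {ι : Type*} [Fintype ι]

lemma sum_integral_ite_abs_lt_sq_le [IsProbabilityMeasure μ] (X : ι → Ω → ℝ) (c : ℝ) :
    ∑ k, ∫ ω, (if |X k ω| < c then X k ω ^ 2 else 0) ∂μ ≤ Fintype.card ι * c ^ 2 := by
  calc ∑ k, ∫ ω, (if |X k ω| < c then X k ω ^ 2 else 0) ∂μ ≤ ∑ _k : ι, c ^ 2 :=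
        Finset.sum_le_sum fun k _ => by simpa using integral_ite_abs_lt_sq_le (μ := μ) (X k) c
    _ = Fintype.card ι * c ^ 2 := by simp

variable {X : ι → Ω → ℝ}

lemma sum_integral_ite_abs_lt_sq_add_sum_integral_ite_le_abs_sq (hX : ∀ k, Measurable (X k))
    (hX2 : ∀ k, Integrable (fun ω => X k ω ^ 2) μ) (c : ℝ) :
    (∑ k, ∫ ω, (if |X k ω| < c then X k ω ^ 2 else 0) ∂μ) +
        ∑ k, ∫ ω, (if c ≤ |X k ω| then X k ω ^ 2 else 0) ∂μ =
      ∑ k, ∫ ω, X k ω ^ 2 ∂μ := by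
  rw [← Finset.sum_add_distrib]
  exact Finset.sum_congr rfl fun k _ =>
    integral_ite_abs_lt_sq_add_integral_ite_le_abs_sq (hX k) (hX2 k) c

lemma abs_sum_integral_ite_abs_lt_pow_three_le (hX : ∀ k, Measurable (X k))
    (hX2 : ∀ k, Integrable (fun ω => X k ω ^ 2) μ) (c : ℝ) :
    |∑ k, ∫ ω, (if |X k ω| < c then X k ω ^ 3 else 0) ∂μ| ≤
      c * ∑ k, ∫ ω, (if |X k ω| < c then X k ω ^ 2 else 0) ∂μ := by
  rw [Finset.mul_sum]
  exact (Finset.abs_sum_le_sum_abs _ _).trans <| Finset.sum_le_sum fun k _ =>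
    abs_integral_ite_abs_lt_pow_three_le (hX k) (hX2 k) c

end TruncatedMoments

section EsseenFraction

variable {z γ m l : ℝ}

lemma max_mul_div_mul_max_self {B : ℝ} (hB : 0 < B) (z : ℝ) :
    max (z * B) B / (z * max B B) = max z 1 / z := by
  rw [max_self, ← mul_div_mul_right (max z 1) z hB.ne', max_mul_of_nonneg _ _ hB.le, one_mul]

lemma max_one_div_mul_add_le (hz : 0 < z) (hl : 0 ≤ l) (hm : |m| ≤ z * (1 - l)) :
    max z 1 / z * (γ * |m| + z * l) ≤ max z 1 * max γ 1 := by
  have hγm : γ * |m| ≤ max γ 1 * (z * (1 - l)) :=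
    (mul_le_mul_of_nonneg_right (le_max_left γ 1) (abs_nonneg m)).trans
      (mul_le_mul_of_nonneg_left hm (by positivity))
  have hzl : z * l ≤ max γ 1 * (z * l) :=
    le_mul_of_one_le_left (by positivity) (le_max_right γ 1)
  calc max z 1 / z * (γ * |m| + z * l) ≤ max z 1 / z * (z * max γ 1) := by
        gcongr
        linarith
    _ = max z 1 * max γ 1 := by field_simp

lemma le_max_one_div_mul_add (hz : 0 < z) (hγ : 0 ≤ γ) (hl : 0 ≤ l) :
    l ≤ max z 1 / z * (γ * |m| + z * l) :=
  calc l ≤ max z 1 * l := le_mul_of_one_le_left hl (le_max_right z 1)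
    _ = max z 1 / z * (z * l) := by field_simp
    _ ≤ max z 1 / z * (γ * |m| + z * l) := by
      gcongr
      exact le_add_of_nonneg_left (by positivity)

lemma le_csSup_image_Ioo_of_tendsto {f h : ℝ → ℝ} {a b c : ℝ} (hab : a < b)
    (hbdd : BddAbove (f '' Ioo a b)) (hhf : ∀ z ∈ Ioo a b, h z ≤ f z)
    (hh : Tendsto h (𝓝[>] a) (𝓝 c)) : c ≤ sSup (f '' Ioo a b) :=
  le_of_tendsto hh <| eventually_of_mem (Ioo_mem_nhdsGT hab) fun z hz =>
    (hhf z hz).trans (le_csSup hbdd (mem_image_of_mem f hz))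

end EsseenFraction

theorem esseen_fraction_g1_bounds_general {Ω : Type*} [MeasureSpace Ω]
    [IsProbabilityMeasure (ℙ : Measure Ω)]
    {n : ℕ} (X : Fin n → Ω → ℝ) (hmeas : ∀ k, Measurable (X k))
    (hint : ∀ k, Integrable fun ω => (X k ω) ^ 2)
    (Bn : ℝ) (hBn : 0 < Bn) (hBdef : Bn ^ 2 = ∑ k, ∫ ω, (X k ω) ^ 2)
    (M L : ℝ → ℝ)
    (hM : ∀ z, M z = (∑ k, ∫ ω, if |X k ω| < z * Bn then (X k ω) ^ 3 else 0) / Bn ^ 3)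
    (hL : ∀ z, L z = (∑ k, ∫ ω, if z * Bn ≤ |X k ω| then (X k ω) ^ 2 else 0) / Bn ^ 2)
    (g₁ : ℝ → ℝ) (hg₁ : ∀ z, g₁ z = max z Bn)
    (ε γ : ℝ) (hε : 0 < ε) (hγ : 0 < γ) :
    1 ≤ sSup ((fun z => g₁ (z * Bn) / (z * g₁ Bn) * (γ * |M z| + z * L z)) '' Ioo 0 ε) ∧
    sSup ((fun z => g₁ (z * Bn) / (z * g₁ Bn) * (γ * |M z| + z * L z)) '' Ioo 0 ε) ≤
      max ε 1 * max γ 1 := by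
  have hcompl : ∀ z, 1 - L z =
      (∑ k, ∫ ω, if |X k ω| < z * Bn then (X k ω) ^ 2 else 0) / Bn ^ 2 := fun z => by
    rw [hL, sub_eq_iff_eq_add, ← add_div,
      sum_integral_ite_abs_lt_sq_add_sum_integral_ite_le_abs_sq hmeas hint, ← hBdef,
      div_self (pow_pos hBn 2).ne']
  have hL0 : ∀ z, 0 ≤ L z := fun z => by
    rw [hL]
    exact div_nonneg (Finset.sum_nonneg fun k _ => integral_nonneg fun ω => by
      split_ifs <;> positivity) (by positivity)
  have hLlow : ∀ z, 1 - n * z ^ 2 ≤ L z := fun z => by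
    have := sum_integral_ite_abs_lt_sq_le (μ := ℙ) X (z * Bn)
    rw [Fintype.card_fin, mul_pow, ← mul_assoc, ← div_le_iff₀ (by positivity), ← hcompl] at this
    linarith
  have hML : ∀ z, |M z| ≤ z * (1 - L z) := fun z => by
    rw [hM, hcompl, abs_div, abs_of_pos (pow_pos hBn 3), div_le_iff₀ (pow_pos hBn 3)]
    calc _ ≤ z * Bn * _ := abs_sum_integral_ite_abs_lt_pow_three_le hmeas hint (z * Bn)
      _ = _ := by field_simp
  simp only [hg₁, max_mul_div_mul_max_self hBn]
  have hupper : ∀ z ∈ Ioo 0 ε, max z 1 / z * (γ * |M z| + z * L z) ≤ max ε 1 * max γ 1 :=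
    fun z hz => (max_one_div_mul_add_le hz.1 (hL0 z) (hML z)).trans (by gcongr; exact hz.2.le)
  have hlower : ∀ z ∈ Ioo 0 ε, 1 - n * z ^ 2 ≤ max z 1 / z * (γ * |M z| + z * L z) :=
    fun z hz => (hLlow z).trans (le_max_one_div_mul_add hz.1 hγ.le (hL0 z))
  have htend : Tendsto (fun z : ℝ => 1 - n * z ^ 2) (𝓝[>] 0) (𝓝 1) :=
    tendsto_nhdsWithin_of_tendsto_nhds <|
      (continuous_const.sub (continuous_const.mul (continuous_pow 2))).tendsto' 0 1 (by simp)
  exact ⟨le_csSup_image_Ioo_of_tendsto hε ⟨_, forall_mem_image.2 hupper⟩ hlower htend,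
    csSup_le ((nonempty_Ioo.2 hε).image _) (forall_mem_image.2 hupper)⟩

/-- With `g₁(z) = max{z, Bₙ}`, the Esseen-type fraction satisfies
`1 ≤ L_{E,n}(g₁,ε,γ) ≤ max{ε,1}·max{γ,1}` for all `ε, γ > 0`. -/
theorem esseen_fraction_g1_bounds {Ω : Type*} [MeasureSpace Ω]
    [IsProbabilityMeasure (ℙ : Measure Ω)]
    {n : ℕ} (X : Fin n → Ω → ℝ) (hmeas : ∀ k, Measurable (X k))
    (hint : ∀ k, Integrable fun ω => (X k ω) ^ 2)
    (hmean : ∀ k, (∫ ω, X k ω) = 0)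
    (Bn : ℝ) (hBn : 0 < Bn) (hBdef : Bn ^ 2 = ∑ k, ∫ ω, (X k ω) ^ 2)
    (M L : ℝ → ℝ)
    (hM : ∀ z, M z = (∑ k, ∫ ω, if |X k ω| < z * Bn then (X k ω) ^ 3 else 0) / Bn ^ 3)
    (hL : ∀ z, L z = (∑ k, ∫ ω, if z * Bn ≤ |X k ω| then (X k ω) ^ 2 else 0) / Bn ^ 2)
    (g₁ : ℝ → ℝ) (hg₁ : ∀ z, g₁ z = max z Bn)
    (ε γ : ℝ) (hε : 0 < ε) (hγ : 0 < γ) :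
    1 ≤ sSup ((fun z => g₁ (z * Bn) / (z * g₁ Bn) * (γ * |M z| + z * L z)) '' Ioo 0 ε) ∧
    sSup ((fun z => g₁ (z * Bn) / (z * g₁ Bn) * (γ * |M z| + z * L z)) '' Ioo 0 ε) ≤
      max ε 1 * max γ 1 :=
  esseen_fraction_g1_bounds_general X hmeas hint Bn hBn hBdef M L hM hL g₁ hg₁ ε γ hε hγ
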